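/- arXiv:1909.11889 — 2 statements merged into one kernel-verified Lean document; each statement's English description precedes it below -/
import Mathlib

section
/- With |init⟩_ralg = (√(1/3)|0⟩ + √(2/3)|1⟩)⊗|0⟩⊗|0⟩⊗|0⟩ ∈ H, one has U_{t2} U_{t'} U_{t1} |init⟩_ralg = √(1/3)|0⟩⊗|0⟩⊗|0⟩⊗|0⟩ + √(2/3)|1⟩⊗|1⟩⊗|fail⟩, where |fail⟩ = √(1/2)(|0⟩⊗|0⟩ + |1⟩⊗|1⟩) ∈ ℂ²⊗ℂ². That is, the protocol's unitary evolution carries the initial state to the global state |Ψ⟩_ralg at time t = 3. -/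
open Matrix
open scoped Matrix Kronecker

noncomputable section

/-- 2×2 complex matrices. -/
abbrev M2 : Type := Matrix (Fin 2) (Fin 2) ℂ

/-- π₀ = |0⟩⟨0| -/
def pi0 : M2 := !![1, 0; 0, 0]
/-- π₁ = |1⟩⟨1| -/
def pi1 : M2 := !![0, 0; 0, 1]
/-- σx = |0⟩⟨1| + |1⟩⟨0| -/
def sx : M2 := !![0, 1; 1, 0]
/-- σz = |0⟩⟨0| − |1⟩⟨1| -/
def sz : M2 := !![1, 0; 0, -1]

/-- Index type of H = ℂ²⊗ℂ²⊗ℂ²⊗ℂ² (tensor factors ordered r, a, l, g). -/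
abbrev I4 : Type := (Fin 2 × Fin 2) × (Fin 2 × Fin 2)

/-- Basis vector |0⟩ of ℂ². -/
def ket0 : Fin 2 → ℂ := ![1, 0]
/-- Basis vector |1⟩ of ℂ². -/
def ket1 : Fin 2 → ℂ := ![0, 1]

/-- Kronecker (tensor) product of vectors. -/
def tk {α β : Type} (u : α → ℂ) (v : β → ℂ) : α × β → ℂ := fun p => u p.1 * v p.2

/-- Hermitian inner product ⟨u|v⟩ = ∑ i, conj (u i) * v i. -/
def ip {α : Type} [Fintype α] (u v : α → ℂ) : ℂ := star u ⬝ᵥ v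

/-- U_{t1} = π₀⊗I⊗I⊗I + π₁⊗σx⊗I⊗I -/
def Ut1 : Matrix I4 I4 ℂ :=
  (pi0 ⊗ₖ 1) ⊗ₖ ((1 : M2) ⊗ₖ 1) + (pi1 ⊗ₖ sx) ⊗ₖ ((1 : M2) ⊗ₖ 1)

/-- U_{t'} = π₀⊗I⊗I⊗I + π₁⊗I⊗(√(1/2)(σx+σz))⊗I -/
def Utp : Matrix I4 I4 ℂ :=
  (pi0 ⊗ₖ 1) ⊗ₖ ((1 : M2) ⊗ₖ 1) +
    (pi1 ⊗ₖ 1) ⊗ₖ (((Real.sqrt (1/2) : ℂ) • (sx + sz)) ⊗ₖ 1)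

/-- U_{t2} = π₀⊗I⊗I⊗I + π₁⊗I⊗(π₀⊗I + π₁⊗σx) -/
def Ut2 : Matrix I4 I4 ℂ :=
  (pi0 ⊗ₖ 1) ⊗ₖ ((1 : M2) ⊗ₖ 1) + (pi1 ⊗ₖ 1) ⊗ₖ (pi0 ⊗ₖ 1 + pi1 ⊗ₖ sx)

/-- |ok⟩ = √(1/2)(|0⟩⊗|0⟩ − |1⟩⊗|1⟩) ∈ ℂ²⊗ℂ² -/
def ok2 : Fin 2 × Fin 2 → ℂ := (Real.sqrt (1/2) : ℂ) • (tk ket0 ket0 - tk ket1 ket1)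
/-- |fail⟩ = √(1/2)(|0⟩⊗|0⟩ + |1⟩⊗|1⟩) ∈ ℂ²⊗ℂ² -/
def fail2 : Fin 2 × Fin 2 → ℂ := (Real.sqrt (1/2) : ℂ) • (tk ket0 ket0 + tk ket1 ket1)

/-- π_ok = |ok⟩⟨ok| -/
def piok : Matrix (Fin 2 × Fin 2) (Fin 2 × Fin 2) ℂ := vecMulVec ok2 (star ok2)
/-- π_fail = |fail⟩⟨fail| -/
def pifail : Matrix (Fin 2 × Fin 2) (Fin 2 × Fin 2) ℂ := vecMulVec fail2 (star fail2)

/-- |init⟩_ralg = (√(1/3)|0⟩ + √(2/3)|1⟩) ⊗ |0⟩ ⊗ |0⟩ ⊗ |0⟩ -/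
def initState : I4 → ℂ :=
  tk (tk ((Real.sqrt (1/3) : ℂ) • ket0 + (Real.sqrt (2/3) : ℂ) • ket1) ket0) (tk ket0 ket0)

section Aux

lemma kron_mulVec {α β : Type} [Fintype α] [Fintype β] [DecidableEq α] [DecidableEq β]
    (A : Matrix α α ℂ) (B : Matrix β β ℂ) (u : α → ℂ) (v : β → ℂ) :
    (A ⊗ₖ B).mulVec (tk u v) = tk (A.mulVec u) (B.mulVec v) := by
  funext p; obtain ⟨i, j⟩ := p
  simp only [Matrix.mulVec, dotProduct, Fintype.sum_prod_type, tk,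
    Matrix.kroneckerMap_apply]
  rw [Finset.sum_mul_sum]
  exact Finset.sum_congr rfl fun k _ => Finset.sum_congr rfl fun l _ => by ring

lemma tk_add_left {α β : Type} (u u' : α → ℂ) (v : β → ℂ) :
    tk (u + u') v = tk u v + tk u' v := funext fun p => add_mul _ _ _
lemma tk_add_right {α β : Type} (u : α → ℂ) (v v' : β → ℂ) :
    tk u (v + v') = tk u v + tk u v' := funext fun p => mul_add _ _ _
lemma tk_smul_left {α β : Type} (c : ℂ) (u : α → ℂ) (v : β → ℂ) :
    tk (c • u) v = c • tk u v := funext fun p => mul_assoc _ _ _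
lemma tk_smul_right {α β : Type} (c : ℂ) (u : α → ℂ) (v : β → ℂ) :
    tk u (c • v) = c • tk u v := funext fun p => by
  simp only [tk, Pi.smul_apply, smul_eq_mul]; ring
lemma tk_zero_left {α β : Type} (v : β → ℂ) : tk (0 : α → ℂ) v = 0 :=
  funext fun p => zero_mul _
lemma tk_zero_right {α β : Type} (u : α → ℂ) : tk u (0 : β → ℂ) = 0 :=
  funext fun p => mul_zero _

lemma pi0_k0 : pi0.mulVec ket0 = ket0 := by
  funext i; fin_cases i <;> simp [Matrix.mulVec, dotProduct, pi0, ket0, Fin.sum_univ_two]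
lemma pi0_k1 : pi0.mulVec ket1 = 0 := by
  funext i; fin_cases i <;> simp [Matrix.mulVec, dotProduct, pi0, ket1, Fin.sum_univ_two]
lemma pi1_k0 : pi1.mulVec ket0 = 0 := by
  funext i; fin_cases i <;> simp [Matrix.mulVec, dotProduct, pi1, ket0, Fin.sum_univ_two]
lemma pi1_k1 : pi1.mulVec ket1 = ket1 := by
  funext i; fin_cases i <;> simp [Matrix.mulVec, dotProduct, pi1, ket1, Fin.sum_univ_two]
lemma sx_k0 : sx.mulVec ket0 = ket1 := by
  funext i; fin_cases i <;> simp [Matrix.mulVec, dotProduct, sx, ket0, ket1, Fin.sum_univ_two]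
lemma sx_k1 : sx.mulVec ket1 = ket0 := by
  funext i; fin_cases i <;> simp [Matrix.mulVec, dotProduct, sx, ket0, ket1, Fin.sum_univ_two]
lemma sz_k0 : sz.mulVec ket0 = ket0 := by
  funext i; fin_cases i <;> simp [Matrix.mulVec, dotProduct, sz, ket0, Fin.sum_univ_two]
lemma sz_k1 : sz.mulVec ket1 = -ket1 := by
  funext i; fin_cases i <;> simp [Matrix.mulVec, dotProduct, sz, ket1, Fin.sum_univ_two]

end Aux

/-- The protocol's unitary evolution carries |init⟩_ralg to the global state
|Ψ⟩_ralg = √(1/3)|0⟩⊗|0⟩⊗|0⟩⊗|0⟩ + √(2/3)|1⟩⊗|1⟩⊗|fail⟩ at time t = 3. -/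
theorem evolution_of_initState :
    (Ut2 * Utp * Ut1).mulVec initState =
      (Real.sqrt (1/3) : ℂ) • tk (tk ket0 ket0) (tk ket0 ket0) +
        (Real.sqrt (2/3) : ℂ) • tk (tk ket1 ket1) fail2 := by
  rw [Matrix.mul_assoc, ← Matrix.mulVec_mulVec, ← Matrix.mulVec_mulVec]
  simp only [initState, fail2, Ut1, Utp, Ut2, Matrix.add_mulVec, Matrix.mulVec_add,
    Matrix.mulVec_smul, kron_mulVec, Matrix.smul_mulVec, Matrix.one_mulVec,
    tk_add_left, tk_add_right, tk_smul_left, tk_smul_right, tk_zero_left, tk_zero_right,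
    Matrix.mulVec_zero, pi0_k0, pi0_k1, pi1_k0, pi1_k1, sx_k0, sx_k1, sz_k0, sz_k1,
    smul_add, add_zero, zero_add, smul_zero, smul_smul, smul_neg, neg_neg]
  module
end
end

section
/- Define the Heisenberg operators Π₀^{t1} = π₀⊗I⊗I⊗I and Π₁^{t2} = (U_{t1}U_{t'}) (I⊗I⊗π₁⊗I) (U_{t'}U_{t1}) on H. Then for |init⟩_ralg = (√(1/3)|0⟩ + √(2/3)|1⟩)⊗|0⟩⊗|0⟩⊗|0⟩ one has ⟨init| Π₁^{t2} Π₀^{t1} |init⟩ = 0, and hence ⟨init| (I_H − Π₁^{t2} Π₀^{t1}) |init⟩ = 1. (Appendix A 3: it is certain that not both 'M_a = 0 at t₁' and 'M_g = 1 at t₂'.) -/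
open Matrix
open scoped Matrix Kronecker

noncomputable section

/-- Heisenberg operator Π₀^{t1} = π₀⊗I⊗I⊗I. -/
def Pi0t1 : Matrix I4 I4 ℂ := (pi0 ⊗ₖ 1) ⊗ₖ ((1 : M2) ⊗ₖ 1)
/-- Heisenberg operator Π₁^{t2} = (U_{t1}U_{t'}) (I⊗I⊗π₁⊗I) (U_{t'}U_{t1}). -/
def Pi1t2 : Matrix I4 I4 ℂ :=
  (Ut1 * Utp) * (((1 : M2) ⊗ₖ 1) ⊗ₖ (pi1 ⊗ₖ 1)) * (Utp * Ut1)

/-- the basis vector |0000⟩ -/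
def e0 : I4 → ℂ := tk (tk ket0 ket0) (tk ket0 ket0)

lemma pi0t1_init : Pi0t1.mulVec initState = (Real.sqrt (1/3) : ℂ) • e0 := by
  funext p
  obtain ⟨⟨r, a⟩, l, g⟩ := p
  simp only [Pi0t1, e0, Matrix.mulVec, dotProduct, Fintype.sum_prod_type,
    Fin.sum_univ_two, Matrix.kroneckerMap_apply, initState, tk, ket0, ket1, pi0,
    Matrix.one_apply, Pi.smul_apply, Pi.add_apply, smul_eq_mul]
  fin_cases r <;> fin_cases a <;> fin_cases l <;> fin_cases g <;>
    simp

lemma ut1_e0 : Ut1.mulVec e0 = e0 := by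
  funext p
  obtain ⟨⟨r, a⟩, l, g⟩ := p
  simp only [Ut1, e0, Matrix.mulVec, dotProduct, Fintype.sum_prod_type,
    Fin.sum_univ_two, Matrix.add_apply, Matrix.kroneckerMap_apply, tk, ket0, pi0, pi1, sx,
    Matrix.one_apply]
  fin_cases r <;> fin_cases a <;> fin_cases l <;> fin_cases g <;> simp

lemma utp_e0 : Utp.mulVec e0 = e0 := by
  funext p
  obtain ⟨⟨r, a⟩, l, g⟩ := p
  simp only [Utp, e0, Matrix.mulVec, dotProduct, Fintype.sum_prod_type,
    Fin.sum_univ_two, Matrix.add_apply, Matrix.kroneckerMap_apply, tk, ket0, pi0, pi1, sx, sz,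
    Matrix.smul_apply, Matrix.one_apply, smul_eq_mul]
  fin_cases r <;> fin_cases a <;> fin_cases l <;> fin_cases g <;> simp

lemma mid_e0 : (((1 : M2) ⊗ₖ (1 : M2)) ⊗ₖ (pi1 ⊗ₖ (1 : M2))).mulVec e0 = 0 := by
  funext p
  obtain ⟨⟨r, a⟩, l, g⟩ := p
  simp only [e0, Matrix.mulVec, dotProduct, Fintype.sum_prod_type,
    Fin.sum_univ_two, Matrix.kroneckerMap_apply, tk, ket0, pi1, Matrix.one_apply]
  fin_cases r <;> fin_cases a <;> fin_cases l <;> fin_cases g <;> simp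

lemma key : (Pi1t2 * Pi0t1).mulVec initState = 0 := by
  rw [← Matrix.mulVec_mulVec, pi0t1_init, Matrix.mulVec_smul]
  rw [Pi1t2, ← Matrix.mulVec_mulVec, ← Matrix.mulVec_mulVec, ← Matrix.mulVec_mulVec,
    ← Matrix.mulVec_mulVec, ut1_e0, utp_e0, mid_e0]
  simp

lemma ip_init_init : ip initState initState = 1 := by
  simp only [ip, dotProduct, Fintype.sum_prod_type, Fin.sum_univ_two,
    initState, tk, ket0, ket1, Pi.star_apply, Pi.smul_apply, Pi.add_apply, smul_eq_mul]
  have h1 : (0:ℝ) ≤ 1/3 := by norm_num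
  have h2 : (0:ℝ) ≤ 2/3 := by norm_num
  simp [star_mul', ← Complex.ofReal_mul, Real.mul_self_sqrt h1, Real.mul_self_sqrt h2]
  ring_nf
  have h3 : ((Real.sqrt 3 : ℝ) : ℂ) ^ 2 = 3 := by
    rw [← Complex.ofReal_pow, Real.sq_sqrt (by norm_num : (0:ℝ) ≤ 3)]; norm_num
  have h4 : ((Real.sqrt 2 : ℝ) : ℂ) ^ 2 = 2 := by
    rw [← Complex.ofReal_pow, Real.sq_sqrt (by norm_num : (0:ℝ) ≤ 2)]; norm_num
  have h5 : ((Real.sqrt 3 : ℝ) : ℂ) ≠ 0 := by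
    simp [Real.sqrt_eq_zero']
  field_simp
  ring_nf
  rw [h3, h4]; ring

/-- Appendix A 3: ⟨init|Π₁^{t2} Π₀^{t1}|init⟩ = 0, hence
⟨init|(I − Π₁^{t2} Π₀^{t1})|init⟩ = 1: it is certain that not both
'M_a = 0 at t₁' and 'M_g = 1 at t₂'. -/
theorem appendix_A3 :
    ip initState ((Pi1t2 * Pi0t1).mulVec initState) = 0 ∧
    ip initState (((1 : Matrix I4 I4 ℂ) - Pi1t2 * Pi0t1).mulVec initState) = 1 := by
  constructor
  · rw [key]
    simp [ip]
  · rw [Matrix.sub_mulVec, key, Matrix.one_mulVec]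
    simpa using ip_init_init
end
end
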